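/- arXiv:1203.4963 — 5 statements merged into one kernel-verified Lean document; each statement's English description precedes it below -/
import Mathlib

section
/- Let G be a finite group, k an algebraically closed field of characteristic p, and let ρ : G → GL_n(k) and θ : G → GL_m(k) be representations with θ irreducible. If for every g ∈ G the characteristic polynomial of ρ(g) annihilates the matrix θ(g), then the kernel of ρ is contained in the kernel of θ. -/
/-! For `h ∈ ker ρ` the characteristic polynomial of `ρ h` is `(X - 1) ^ n`, so `θ h` is unipotent,
hence of `p`-power order. A finite `p`-group acting linearly in characteristic `p` on a nonzero
space fixes a nonzero vector: on the finite `𝔽_p`-span of an orbit, of `p`-power size, the number of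
fixed points is divisible by `p`, and `0` is one of them. So the vectors fixed by `θ (ker ρ)` form a
nonzero subspace, which is `θ G`-invariant because `ker ρ` is normal, hence everything. -/

theorem pow_char_pow_eq_one_of_isNilpotent_sub_one {R : Type*} [Ring R] {p : ℕ} [Fact p.Prime]
    [CharP R p] {a : R} (h : IsNilpotent (a - 1)) : ∃ n, a ^ p ^ n = 1 := by
  obtain ⟨n, hn⟩ := h
  refine ⟨n, ?_⟩
  have : (a - 1) ^ p ^ n = 0 :=
    pow_eq_zero_of_le (Nat.lt_pow_self (Fact.out : p.Prime).one_lt).le hn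
  rwa [sub_pow_char_pow_of_commute p n (Commute.one_right a), one_pow, sub_eq_zero] at this

namespace Representation

variable {k G V : Type*} [Field k] [Group G] [Finite G] [AddCommGroup V] [Module k V]
  [Nontrivial V]

theorem invariants_ne_bot_of_isPGroup {p : ℕ} [Fact p.Prime] [CharP k p] (hG : IsPGroup p G)
    (ρ : Representation k G V) : ρ.invariants ≠ ⊥ := by
  let _ : Algebra (ZMod p) k := ZMod.algebra k p
  let _ : Module (ZMod p) V := .compHom V (algebraMap (ZMod p) k)
  have : IsScalarTower (ZMod p) k V := ⟨fun a b v => mul_smul (algebraMap (ZMod p) k a) b v⟩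
  let _ : MulAction G V := .compHom V ρ
  obtain ⟨v, hv⟩ := exists_ne (0 : V)
  let A := Submodule.span (ZMod p) (MulAction.orbit G v)
  let B : SubMulAction G V :=
    { carrier := A
      smul_mem' := fun g x hx => by
        have : Submodule.map ((ρ g).restrictScalars (ZMod p)) A ≤ A := by
          rw [Submodule.map_span_le]
          rintro _ ⟨h, rfl⟩
          exact Submodule.subset_span ⟨g * h, mul_smul g h v⟩
        exact this ⟨x, hx, rfl⟩ }
  have : Module.Finite (ZMod p) A := .span_of_finite _ (Set.finite_range _)
  have : Finite A := Module.finite_of_finite (ZMod p)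
  have : Fintype A := Fintype.ofFinite A
  have hcard : p ∣ Nat.card B := by
    have : Nontrivial A := ⟨⟨⟨v, Submodule.subset_span (MulAction.mem_orbit_self v)⟩, 0,
      fun h => hv (congrArg Subtype.val h)⟩⟩
    change p ∣ Nat.card A
    rw [Nat.card_eq_fintype_card, Module.card_eq_pow_finrank (K := ZMod p), ZMod.card]
    exact dvd_pow_self p Module.finrank_pos.ne'
  obtain ⟨b, hb, hne⟩ := hG.exists_fixed_point_of_prime_dvd_card_of_fixed_point B hcard
    (a := ⟨0, A.zero_mem⟩) fun g => Subtype.ext (map_zero (ρ g))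
  intro h
  exact hne (Subtype.ext ((Submodule.eq_bot_iff _).1 h b fun g => congrArg Subtype.val (hb g))).symm

theorem invariants_ne_bot_of_isNilpotent_sub_one (p : ℕ) [Fact p.Prime] [CharP k p]
    (ρ : Representation k G V) (hρ : ∀ g, IsNilpotent (ρ g - 1)) : ρ.invariants ≠ ⊥ := by
  have : CharP (Module.End k V) p := charP_of_injective_algebraMap' k p
  let P := ρ.asGroupHom.range
  have : Finite P := Set.finite_range ρ.asGroupHom |>.to_subtype
  have hP : IsPGroup p P := by
    rintro ⟨_, g, rfl⟩
    obtain ⟨n, hn⟩ := pow_char_pow_eq_one_of_isNilpotent_sub_one (hρ g)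
    exact ⟨n, Subtype.ext (Units.ext hn)⟩
  have hPρ := invariants_ne_bot_of_isPGroup hP ((Units.coeHom _).comp P.subtype)
  rw [Submodule.ne_bot_iff] at hPρ ⊢
  obtain ⟨v, hv, hv0⟩ := hPρ
  exact ⟨v, fun g => hv ⟨_, g, rfl⟩, hv0⟩

theorem apply_eq_one_of_isNilpotent_sub_one (p : ℕ) [Fact p.Prime] [CharP k p]
    (ρ : Representation k G V) (hρ : ∀ W : Submodule k V, (∀ g, W ≤ W.comap (ρ g)) → W = ⊥ ∨ W = ⊤)
    (N : Subgroup G) [N.Normal] (hN : ∀ g ∈ N, IsNilpotent (ρ g - 1)) {g : G} (hg : g ∈ N) :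
    ρ g = 1 := by
  have htop : invariants (ρ.comp N.subtype) = ⊤ :=
    (hρ _ (le_comap_invariants ρ N)).resolve_left
      (invariants_ne_bot_of_isNilpotent_sub_one p _ fun s => hN s s.2)
  ext x
  exact (htop ▸ Submodule.mem_top : x ∈ invariants (ρ.comp N.subtype)) ⟨g, hg⟩

end Representation

open Matrix

theorem stmt0_general (p : ℕ) [Fact p.Prime] (k : Type*) [Field k] [CharP k p]
    (G : Type*) [Group G] [Finite G] (n m : ℕ)
    (ρ : G →* Matrix.GeneralLinearGroup (Fin n) k)
    (θ : G →* Matrix.GeneralLinearGroup (Fin m) k)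
    (hθirr : ∀ W : Submodule k (Fin m → k),
      (∀ (g : G), ∀ x ∈ W, ((θ g : Matrix (Fin m) (Fin m) k)).mulVec x ∈ W) →
      W = ⊥ ∨ W = ⊤)
    (hann : ∀ g : G,
      (Polynomial.aeval ((θ g : Matrix (Fin m) (Fin m) k)))
        (Matrix.charpoly (ρ g : Matrix (Fin n) (Fin n) k)) = 0) :
    ρ.ker ≤ θ.ker := by
  intro h hh
  rcases isEmpty_or_nonempty (Fin m) with _ | _
  · exact Units.ext (Subsingleton.elim _ _)
  let σ : Representation k G (Fin m → k) :=
    (MonoidHomClass.toMonoidHom toLinAlgEquiv').comp ((Units.coeHom _).comp θ)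
  have hunip : ∀ g ∈ ρ.ker, IsNilpotent (σ g - 1) := by
    intro g hg
    have : ((θ g : Matrix (Fin m) (Fin m) k) - 1) ^ n = 0 := by
      simpa [MonoidHom.mem_ker.1 hg, charpoly_one] using hann g
    simpa [σ] using IsNilpotent.map ⟨n, this⟩ toLinAlgEquiv'
  have hσh : σ h = 1 := σ.apply_eq_one_of_isNilpotent_sub_one p
    (fun W hW => hθirr W fun g x hx => hW g hx) ρ.ker hunip hh
  simpa [σ] using hσh

/-- If `θ` is irreducible and for every `g ∈ G` the characteristic polynomial of
`ρ g` annihilates the matrix `θ g`, then `ker ρ ≤ ker θ`. -/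
theorem stmt0 (p : ℕ) [Fact p.Prime] (k : Type*) [Field k] [IsAlgClosed k] [CharP k p]
    (G : Type*) [Group G] [Finite G] (n m : ℕ)
    (ρ : G →* Matrix.GeneralLinearGroup (Fin n) k)
    (θ : G →* Matrix.GeneralLinearGroup (Fin m) k)
    (hθirr : ∀ W : Submodule k (Fin m → k),
      (∀ (g : G), ∀ x ∈ W, ((θ g : Matrix (Fin m) (Fin m) k)).mulVec x ∈ W) →
      W = ⊥ ∨ W = ⊤)
    (hann : ∀ g : G,
      (Polynomial.aeval ((θ g : Matrix (Fin m) (Fin m) k)))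
        (Matrix.charpoly (ρ g : Matrix (Fin n) (Fin n) k)) = 0) :
    ρ.ker ≤ θ.ker :=
  stmt0_general p k G n m ρ θ hθirr hann
end

section
/- Let k be an algebraically closed field of characteristic p, G a finite group, H a normal subgroup of index 3, and ψ : H → k^× a character such that ρ = Ind_H^G ψ : G → GL_3(k) is irreducible. Then ρ(G) is generated by its subset of regular elements. More precisely, for every g ∈ G \ H, the matrix ρ(g) is regular, and G \ H generates G. -/
/-- If `H ⊴ G` has index 3, `ψ : H → k^×` is a character, and
`ρ ≅ Ind_H^G ψ : G → GL_3(k)` is irreducible (the induced representation being realized on the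
space `V` of functions `f : G → k` with `f (h * g) = ψ h * f g`, `G` acting by right
translation), then `ρ(G)` is generated by its subset of regular elements; more precisely, for
every `g ∈ G \ H` the matrix `ρ g` is regular, and `G \ H` generates `G`. -/
theorem stmt5 (p : ℕ) [Fact p.Prime] (k : Type*) [Field k] [IsAlgClosed k] [CharP k p]
    (G : Type*) [Group G] [Finite G]
    (H : Subgroup G) [H.Normal] (hindex : H.index = 3)
    (ψ : H →* kˣ)
    (ρ : G →* Matrix.GeneralLinearGroup (Fin 3) k)
    (V : Submodule k (G → k))
    (hV : ∀ f : G → k, f ∈ V ↔ ∀ (h : H) (g : G), f ((h : G) * g) = (ψ h : k) * f g)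
    (e : (Fin 3 → k) ≃ₗ[k] V)
    (he : ∀ (g : G) (v : Fin 3 → k) (x : G),
      ((e ((ρ g : Matrix (Fin 3) (Fin 3) k).mulVec v)) : G → k) x = ((e v) : G → k) (x * g))
    (hρirr : ∀ W : Submodule k (Fin 3 → k),
      (∀ (g : G), ∀ x ∈ W, ((ρ g : Matrix (Fin 3) (Fin 3) k)).mulVec x ∈ W) →
      W = ⊥ ∨ W = ⊤) :
    (∀ g : G, g ∉ H →
      minpoly k (ρ g : Matrix (Fin 3) (Fin 3) k) =
        Matrix.charpoly (ρ g : Matrix (Fin 3) (Fin 3) k)) ∧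
    Subgroup.closure {g : G | g ∉ H} = ⊤ ∧
    ρ.range = Subgroup.closure
      {A : Matrix.GeneralLinearGroup (Fin 3) k | A ∈ ρ.range ∧
        minpoly k (A : Matrix (Fin 3) (Fin 3) k) =
          Matrix.charpoly (A : Matrix (Fin 3) (Fin 3) k)} := by
  classical
  -- ### Part 1: every `ρ g` with `g ∉ H` is regular
  have hreg : ∀ g : G, g ∉ H →
      minpoly k (ρ g : Matrix (Fin 3) (Fin 3) k) =
        Matrix.charpoly (ρ g : Matrix (Fin 3) (Fin 3) k) := by
    intro g hg
    set A : Matrix (Fin 3) (Fin 3) k := (ρ g : Matrix (Fin 3) (Fin 3) k) with hAdef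
    -- `g * g ∉ H` since the image of `g` in `G ⧸ H` has order `3`
    have hg2 : g * g ∉ H := by
      intro hgg
      apply hg
      have h3 : Nat.card (G ⧸ H) = 3 := hindex
      have hq1 : ((g : G ⧸ H)) ^ 2 = 1 := by
        rw [sq]
        exact (QuotientGroup.eq_one_iff (g * g)).2 hgg
      have hdvd2 : orderOf ((g : G ⧸ H)) ∣ 2 := orderOf_dvd_of_pow_eq_one hq1
      have hdvd3 : orderOf ((g : G ⧸ H)) ∣ 3 := h3 ▸ orderOf_dvd_natCard _
      have h1 : orderOf ((g : G ⧸ H)) ∣ 1 := by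
        have := Nat.dvd_gcd hdvd2 hdvd3
        simpa using this
      have : ((g : G ⧸ H)) = 1 := orderOf_eq_one_iff.1 (Nat.dvd_one.1 h1)
      exact (QuotientGroup.eq_one_iff g).1 this
    have hginv : g⁻¹ ∉ H := fun h => hg (by simpa using H.inv_mem h)
    -- the cyclic test function, supported on `H * g * g`
    set f₂ : G → k := fun x =>
      if hx : x * g⁻¹ * g⁻¹ ∈ H then ((ψ ⟨x * g⁻¹ * g⁻¹, hx⟩ : kˣ) : k) else 0 with hf₂def
    have hf₂V : f₂ ∈ V := by
      rw [hV]
      intro h x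
      by_cases hx : x * g⁻¹ * g⁻¹ ∈ H
      · have hx' : (h : G) * x * g⁻¹ * g⁻¹ ∈ H := by
          have heq : (h : G) * x * g⁻¹ * g⁻¹ = (h : G) * (x * g⁻¹ * g⁻¹) := by group
          rw [heq]; exact H.mul_mem h.2 hx
        simp only [hf₂def, dif_pos hx, dif_pos hx']
        have heq : (⟨(h : G) * x * g⁻¹ * g⁻¹, hx'⟩ : H) = h * ⟨x * g⁻¹ * g⁻¹, hx⟩ := by
          ext; simp [mul_assoc]
        rw [heq, map_mul, Units.val_mul]
      · have hx' : (h : G) * x * g⁻¹ * g⁻¹ ∉ H := by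
          intro hc
          apply hx
          have heq : x * g⁻¹ * g⁻¹ = (h : G)⁻¹ * ((h : G) * x * g⁻¹ * g⁻¹) := by group
          rw [heq]; exact H.mul_mem (H.inv_mem h.2) hc
        simp only [hf₂def, dif_neg hx, dif_neg hx', mul_zero]
    -- values of the test function
    have hval2 : f₂ (g * g) = 1 := by
      have h1 : g * g * g⁻¹ * g⁻¹ ∈ H := by
        have heq : g * g * g⁻¹ * g⁻¹ = 1 := by group
        rw [heq]; exact H.one_mem
      simp only [hf₂def, dif_pos h1]
      have heq : (⟨g * g * g⁻¹ * g⁻¹, h1⟩ : H) = 1 := by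
        ext; show g * g * g⁻¹ * g⁻¹ = 1; group
      rw [heq, map_one, Units.val_one]
    have hvalg : f₂ g = 0 := by
      have h1 : g * g⁻¹ * g⁻¹ ∉ H := by
        intro hc
        apply hginv
        have heq : g⁻¹ = g * g⁻¹ * g⁻¹ := by group
        rw [heq]; exact hc
      simp only [hf₂def, dif_neg h1]
    have hval1 : f₂ 1 = 0 := by
      have h1 : (1 : G) * g⁻¹ * g⁻¹ ∉ H := by
        intro hc
        apply hg2
        have heq : g * g = ((1 : G) * g⁻¹ * g⁻¹)⁻¹ := by simp [mul_inv_rev]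
        rw [heq]; exact H.inv_mem hc
      simp only [hf₂def, dif_neg h1]
    -- transport through `e`
    set v : Fin 3 → k := e.symm ⟨f₂, hf₂V⟩ with hvdef
    have hev : ∀ x : G, ((e v : V) : G → k) x = f₂ x := by
      intro x
      have : e v = ⟨f₂, hf₂V⟩ := e.apply_symm_apply _
      rw [this]
    have hev1 : ∀ x : G, ((e (A.mulVec v) : V) : G → k) x = f₂ (x * g) := by
      intro x
      rw [he g v x, hev]
    have hev2 : ∀ x : G, ((e ((A * A).mulVec v) : V) : G → k) x = f₂ (x * g * g) := by
      intro x
      rw [← Matrix.mulVec_mulVec, he g (A.mulVec v) x, hev1]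
    -- no nontrivial quadratic relation
    have key : ∀ c0 c1 c2 : k,
        c0 • (1 : Matrix (Fin 3) (Fin 3) k) + c1 • A + c2 • (A * A) = 0 →
        c0 = 0 ∧ c1 = 0 ∧ c2 = 0 := by
      intro c0 c1 c2 hB
      have heq : ∀ x : G, c0 * f₂ x + c1 * f₂ (x * g) + c2 * f₂ (x * g * g) = 0 := by
        intro x
        have h0 : (c0 • (1 : Matrix (Fin 3) (Fin 3) k) + c1 • A + c2 • (A * A)).mulVec v
            = 0 := by rw [hB, Matrix.zero_mulVec]
        have h1 : (c0 • (1 : Matrix (Fin 3) (Fin 3) k) + c1 • A + c2 • (A * A)).mulVec v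
            = c0 • v + c1 • A.mulVec v + c2 • (A * A).mulVec v := by
          simp [Matrix.add_mulVec, Matrix.smul_mulVec, Matrix.one_mulVec]
        rw [h1] at h0
        have h2 := congrArg (fun w => ((e w : V) : G → k) x) h0
        simp only [map_add, map_smul, Submodule.coe_add, SetLike.val_smul, Pi.add_apply,
          Pi.smul_apply, smul_eq_mul, map_zero, ZeroMemClass.coe_zero, Pi.zero_apply] at h2
        rw [hev x, hev1 x, hev2 x] at h2
        exact h2
      have hc2 : c2 = 0 := by
        have h := heq 1
        simp only [one_mul] at h
        rw [hval1, hvalg, hval2] at h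
        simpa using h
      have hc1 : c1 = 0 := by
        have h := heq g
        rw [hc2, hvalg, hval2] at h
        simpa using h
      have hc0 : c0 = 0 := by
        have h := heq (g * g)
        rw [hc2, hc1, hval2] at h
        simpa using h
      exact ⟨hc0, hc1, hc2⟩
    -- now compare minimal and characteristic polynomial
    have hint : IsIntegral k A := IsIntegral.of_finite k A
    have hmono : (minpoly k A).Monic := minpoly.monic hint
    have hne0 : minpoly k A ≠ 0 := minpoly.ne_zero hint
    have hdeg3 : (Matrix.charpoly A).natDegree = 3 := by
      simpa using A.charpoly_natDegree_eq_dim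
    have hdvd : minpoly k A ∣ Matrix.charpoly A := A.minpoly_dvd_charpoly
    have hge : 3 ≤ (minpoly k A).natDegree := by
      by_contra hlt
      push_neg at hlt
      have haev : (Polynomial.aeval A) (minpoly k A) = 0 := minpoly.aeval k A
      rw [Polynomial.aeval_eq_sum_range' hlt] at haev
      rw [Finset.sum_range_succ, Finset.sum_range_succ, Finset.sum_range_succ,
        Finset.sum_range_zero, zero_add, pow_zero, pow_one, sq] at haev
      obtain ⟨h0, h1, h2⟩ := key _ _ _ haev
      have hcoef : (minpoly k A).coeff (minpoly k A).natDegree = 1 := hmono.coeff_natDegree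
      interval_cases hd : (minpoly k A).natDegree
      · rw [h0] at hcoef; exact one_ne_zero hcoef.symm
      · rw [h1] at hcoef; exact one_ne_zero hcoef.symm
      · rw [h2] at hcoef; exact one_ne_zero hcoef.symm
    exact (Polynomial.eq_of_monic_of_dvd_of_natDegree_le hmono A.charpoly_monic hdvd
      (hdeg3.le.trans hge)).symm
  -- ### Part 2: the complement of `H` generates `G`
  have hne : H ≠ ⊤ := by
    intro h
    rw [h, Subgroup.index_top] at hindex
    exact absurd hindex (by norm_num)
  obtain ⟨g₀, hg₀⟩ : ∃ g : G, g ∉ H := by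
    by_contra hc
    push_neg at hc
    exact hne ((Subgroup.eq_top_iff' H).2 hc)
  have hclosure : Subgroup.closure {g : G | g ∉ H} = ⊤ := by
    rw [eq_top_iff]
    intro x _
    by_cases hx : x ∈ H
    · have h1 : x * g₀ ∈ Subgroup.closure {g : G | g ∉ H} := by
        apply Subgroup.subset_closure
        intro hm
        apply hg₀
        have := H.mul_mem (H.inv_mem hx) hm
        simpa [mul_assoc] using this
      have h2 : g₀⁻¹ ∈ Subgroup.closure {g : G | g ∉ H} :=
        inv_mem (Subgroup.subset_closure hg₀)
      have := mul_mem h1 h2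
      simpa [mul_assoc] using this
    · exact Subgroup.subset_closure hx
  refine ⟨hreg, hclosure, ?_⟩
  -- ### Part 3: the image is generated by its regular elements
  apply le_antisymm
  · intro a ha
    obtain ⟨x, rfl⟩ := ha
    have hx : x ∈ Subgroup.closure {g : G | g ∉ H} := hclosure ▸ Subgroup.mem_top x
    refine Subgroup.closure_induction (fun y hy => ?_) ?_ (fun y z _ _ hy hz => ?_)
      (fun y _ hy => ?_) hx
    · exact Subgroup.subset_closure ⟨⟨y, rfl⟩, hreg y hy⟩
    · rw [map_one]; exact one_mem _
    · rw [map_mul]; exact mul_mem hy hz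
    · rw [map_inv]; exact inv_mem hy
  · exact (Subgroup.closure_le _).2 (fun a ha => ha.1)
end

section
/- Let k be an algebraically closed field, and let G ⊆ GL_3(k) be a finite subgroup acting irreducibly on k^3 and containing a regular unipotent element. Then G is generated by its subset of regular elements. -/
open Polynomial Module

namespace Stmt6Aux

variable {k : Type*} [Field k]

theorem monic_eq_of_dvd {p q : k[X]} (hp : p.Monic) (hq : q.Monic) (hdvd : p ∣ q)
    (hdeg : q.natDegree ≤ p.natDegree) : p = q := by
  obtain ⟨r, rfl⟩ := hdvd
  have hr : r.Monic := hp.of_mul_monic_left hq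
  have hmul : (p * r).natDegree = p.natDegree + r.natDegree :=
    Polynomial.natDegree_mul hp.ne_zero hr.ne_zero
  have h0 : r.natDegree = 0 := by omega
  rw [hr.natDegree_eq_zero.mp h0, mul_one]

theorem minpoly_dvd_charpoly (M : Matrix (Fin 3) (Fin 3) k) : minpoly k M ∣ M.charpoly :=
  minpoly.dvd k M (Matrix.aeval_self_charpoly M)

theorem charpoly_deg3 (M : Matrix (Fin 3) (Fin 3) k) : M.charpoly.natDegree = 3 := by
  rw [Matrix.charpoly_natDegree_eq_dim, Fintype.card_fin]

theorem reg_iff (M : Matrix (Fin 3) (Fin 3) k) :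
    minpoly k M = M.charpoly ↔ (minpoly k M).natDegree = 3 := by
  constructor
  · intro h; rw [h, charpoly_deg3]
  · intro h
    exact monic_eq_of_dvd (minpoly.monic (Algebra.IsIntegral.isIntegral M))
      (Matrix.charpoly_monic M) (minpoly_dvd_charpoly M) (by rw [charpoly_deg3, h])

theorem deg_le_two (M : Matrix (Fin 3) (Fin 3) k) (h : minpoly k M ≠ M.charpoly) :
    (minpoly k M).natDegree ≤ 2 := by
  have h3 : (minpoly k M).natDegree ≤ 3 := by
    have := Polynomial.natDegree_le_of_dvd (minpoly_dvd_charpoly M)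
      (Matrix.charpoly_monic M).ne_zero
    rwa [charpoly_deg3] at this
  have hne : (minpoly k M).natDegree ≠ 3 := fun hc => h ((reg_iff M).mpr hc)
  omega









theorem ker_dim_one (N : Module.End k (Fin 3 → k)) (h3 : N ^ 3 = 0) (h2 : N ^ 2 ≠ 0) :
    finrank k (LinearMap.ker N) = 1 := by
  have hV : finrank k (Fin 3 → k) = 3 := Module.finrank_fin_fun k
  have happ : ∀ v, N (N (N v)) = 0 := by
    intro v
    have := DFunLike.congr_fun h3 v
    rwa [pow_succ, pow_succ, pow_one, Module.End.mul_apply, Module.End.mul_apply,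
      LinearMap.zero_apply] at this
  have hker : LinearMap.ker N ≠ ⊥ := by
    intro hk
    have hinj : Function.Injective N := LinearMap.ker_eq_bot.mp hk
    obtain ⟨v, hv⟩ := exists_ne (0 : Fin 3 → k)
    apply hv
    have := happ v
    rw [← map_zero N] at this
    have := hinj this
    rw [← map_zero N] at this
    have := hinj this
    rw [← map_zero N] at this
    exact hinj this
  have hge : 1 ≤ finrank k (LinearMap.ker N) := by
    by_contra hc
    push_neg at hc
    apply hker
    have h0 : finrank k (LinearMap.ker N) = 0 := by omega
    exact Submodule.finrank_eq_zero.mp h0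
  have hub : finrank k (LinearMap.ker N) ≤ 1 := by
    by_contra hc
    push_neg at hc
    have hrn := LinearMap.finrank_range_add_finrank_ker N
    rw [hV] at hrn
    have hr1 : finrank k (LinearMap.range N) ≤ 1 := by omega
    have hr2ne : LinearMap.range (N ^ 2) ≠ ⊥ := by rwa [Ne, LinearMap.range_eq_bot]
    have hle : LinearMap.range (N ^ 2) ≤ LinearMap.range N := by
      rw [pow_two, Module.End.mul_eq_comp]
      exact LinearMap.range_comp_le_range N N
    have h1le : 1 ≤ finrank k (LinearMap.range (N ^ 2)) := by
      by_contra hc2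
      push_neg at hc2
      exact hr2ne (Submodule.finrank_eq_zero.mp (by omega))
    have hmono := Submodule.finrank_mono hle
    have heq : LinearMap.range (N ^ 2) = LinearMap.range N :=
      Submodule.eq_of_le_of_finrank_le hle (by omega)
    have h3' : LinearMap.range (N ^ 3) = LinearMap.range (N ^ 2) := by
      have e3 : N ^ 3 = N ∘ₗ N ^ 2 := by
        rw [pow_succ', Module.End.mul_eq_comp]
      have e2 : N ^ 2 = N ∘ₗ N := by rw [pow_two, Module.End.mul_eq_comp]
      rw [e3, LinearMap.range_comp, heq, ← LinearMap.range_comp, ← e2]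
      exact heq
    rw [h3, LinearMap.range_zero] at h3'
    exact hr2ne h3'.symm
  omega

theorem eig_one (u : Module.End k (Fin 3 → k)) (hnil : (u - 1) ^ 3 = 0)
    {c : k} {w : Fin 3 → k} (hw : w ≠ 0) (hcw : u w = c • w) : c = 1 := by
  have e1 : (u - 1) w = (c - 1) • w := by
    rw [LinearMap.sub_apply, Module.End.one_apply, hcw, sub_smul, one_smul]
  have e2 : (((u - 1) ^ 2 : Module.End k (Fin 3 → k))) w = ((c - 1) * (c - 1)) • w := by
    rw [pow_two, Module.End.mul_apply, e1, map_smul, e1, smul_smul]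
  have e3 : (((u - 1) ^ 3 : Module.End k (Fin 3 → k))) w = ((c - 1) * ((c - 1) * (c - 1))) • w := by
    rw [pow_succ, Module.End.mul_apply, e1, map_smul, e2, smul_smul]
  rw [hnil, LinearMap.zero_apply] at e3
  have hc3 : (c - 1) * ((c - 1) * (c - 1)) = 0 := by
    rcases smul_eq_zero.mp e3.symm with h | h
    · exact h
    · exact absurd h hw
  have hc0 : c - 1 = 0 := by
    rcases mul_eq_zero.mp hc3 with h | h
    · exact h
    · rcases mul_eq_zero.mp h with h' | h' <;> exact h'
  exact sub_eq_zero.mp hc0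

theorem eig_plane [IsAlgClosed k] (f : Module.End k (Fin 3 → k))
    (hdeg : (minpoly k f).natDegree ≤ 2) :
    ∃ c : k, 2 ≤ finrank k (LinearMap.ker (f - c • 1)) := by
  have hV : finrank k (Fin 3 → k) = 3 := Module.finrank_fin_fun k
  have hint : IsIntegral k f := Algebra.IsIntegral.isIntegral f
  have hmon := minpoly.monic hint
  have hdp : 0 < (minpoly k f).natDegree := minpoly.natDegree_pos hint
  obtain ⟨a, ha⟩ := IsAlgClosed.exists_root (minpoly k f) (by
    rw [Polynomial.degree_eq_natDegree hmon.ne_zero]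
    intro h
    have h0 : (minpoly k f).natDegree = 0 := by exact_mod_cast h
    omega)
  obtain ⟨q, hq⟩ := Polynomial.dvd_iff_isRoot.mpr ha
  have hqm : q.Monic := (Polynomial.monic_X_sub_C a).of_mul_monic_left (hq ▸ hmon)
  have hqd : q.natDegree ≤ 1 := by
    have hmul := Polynomial.natDegree_mul (Polynomial.X_sub_C_ne_zero a) hqm.ne_zero
    rw [← hq, Polynomial.natDegree_X_sub_C] at hmul
    omega
  rcases Nat.lt_or_ge q.natDegree 1 with h0 | h1
  · have hq1 : q = 1 := hqm.natDegree_eq_zero.mp (by omega)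
    have hp : minpoly k f = X - C a := by rw [hq, hq1, mul_one]
    have hf : f - a • 1 = 0 := by
      have h0' := minpoly.aeval k f
      rw [hp, map_sub, Polynomial.aeval_X, Polynomial.aeval_C,
        Algebra.algebraMap_eq_smul_one] at h0'
      exact h0'
    refine ⟨a, ?_⟩
    rw [hf, LinearMap.ker_zero, finrank_top, hV]
    omega
  · have hq1 : q.natDegree = 1 := le_antisymm hqd h1
    have hco : q.coeff 1 = 1 := by
      have := hqm.coeff_natDegree
      rwa [hq1] at this
    have hqXC : q = X - C (-q.coeff 0) := by
      have h' := Polynomial.eq_X_add_C_of_natDegree_le_one hqd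
      rw [hco, map_one, one_mul] at h'
      rw [map_neg, sub_neg_eq_add]
      exact h'
    set b := -q.coeff 0
    have h0' := minpoly.aeval k f
    rw [hq, hqXC, map_mul, map_sub, map_sub, Polynomial.aeval_X, Polynomial.aeval_C,
      Polynomial.aeval_C, Algebra.algebraMap_eq_smul_one, Algebra.algebraMap_eq_smul_one,
      Module.End.mul_eq_comp] at h0'
    have hle : LinearMap.range (f - b • 1) ≤ LinearMap.ker (f - a • 1) :=
      LinearMap.range_le_ker_iff.mpr h0'
    have h2 := LinearMap.finrank_range_add_finrank_ker (f - b • 1)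
    rw [hV] at h2
    have hmono := Submodule.finrank_mono hle
    by_contra hc
    push_neg at hc
    have ha2 := hc a
    have hb2 := hc b
    omega









theorem core (u y : Module.End k (Fin 3 → k)) (hyinj : Function.Injective y)
    (hL1 : finrank k (LinearMap.ker (u - 1)) = 1)
    (hnil : (u - 1) ^ 3 = 0)
    (W W' : Submodule k (Fin 3 → k)) (hW2 : finrank k W = 2) (hW'2 : 2 ≤ finrank k W')
    (lam mu : k) (hWy : ∀ w ∈ W, y w = lam • w) (hW'yu : ∀ w ∈ W', y (u w) = mu • w) :
    LinearMap.ker (u - 1) ≤ W := by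
  have hV : finrank k (Fin 3 → k) = 3 := Module.finrank_fin_fun k
  have hsup : finrank k ↥(W ⊔ W') ≤ 3 := (Submodule.finrank_le _).trans hV.le
  have hsum := Submodule.finrank_sup_add_finrank_inf_eq W W'
  have hinf : 1 ≤ finrank k ↥(W ⊓ W') := by omega
  have hWW' : W ⊓ W' ≠ ⊥ := by
    intro h
    rw [h, finrank_bot] at hinf
    omega
  obtain ⟨w₀, hw₀mem, hw₀⟩ := Submodule.exists_mem_ne_zero_of_ne_bot hWW'
  have hWne : W ≠ ⊥ := by
    intro h
    rw [h, finrank_bot] at hW2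
    omega
  obtain ⟨w₁, hw₁W, hw₁⟩ := Submodule.exists_mem_ne_zero_of_ne_bot hWne
  have hlam : lam ≠ 0 := by
    intro h
    apply hw₁
    apply hyinj
    rw [hWy w₁ hw₁W, h, zero_smul, map_zero]
  set c := lam⁻¹ * mu with hc
  have huw : ∀ w ∈ W ⊓ W', u w = c • w := by
    intro w hw
    obtain ⟨hwW, hwW'⟩ := hw
    apply hyinj
    rw [hW'yu w hwW', map_smul, hWy w hwW, smul_smul]
    congr 1
    rw [hc]
    field_simp
  have hc1 : c = 1 := eig_one u hnil hw₀ (huw w₀ hw₀mem)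
  have hsub : W ⊓ W' ≤ LinearMap.ker (u - 1) := by
    intro w hw
    rw [LinearMap.mem_ker, LinearMap.sub_apply, huw w hw, hc1, one_smul,
      Module.End.one_apply, sub_self]
  have heq : W ⊓ W' = LinearMap.ker (u - 1) :=
    Submodule.eq_of_le_of_finrank_le hsub (by rw [hL1]; exact hinf)
  rw [← heq]
  exact inf_le_left

/-- Conjugation by a unit as an algebra equivalence. -/
def conjAE {A : Type*} [Ring A] [Algebra k A] (g : Aˣ) : A ≃ₐ[k] A where
  toFun x := g * x * ↑g⁻¹
  invFun x := ↑g⁻¹ * x * g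
  left_inv x := by
    simp [mul_assoc]
  right_inv x := by
    simp [mul_assoc]
  map_mul' x z := by
    simp only [mul_assoc, Units.inv_mul_cancel_left]
  map_add' x z := by
    simp [mul_add, add_mul]
  commutes' r := by
    show (g : A) * algebraMap k A r * ↑g⁻¹ = algebraMap k A r
    have h := (Algebra.commutes r (g : A)).symm
    rw [h, mul_assoc, Units.mul_inv, mul_one]

theorem minpoly_conj {A : Type*} [Ring A] [Algebra k A] (g : Aˣ) (x : A) :
    minpoly k ((g : A) * x * ↑g⁻¹) = minpoly k x :=
  minpoly.algEquiv_eq (conjAE g) x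









abbrev GL3 (k : Type*) [Field k] := Matrix.GeneralLinearGroup (Fin 3) k

/-- The action of a matrix group element on `k³` as a linear endomorphism. -/
noncomputable def psi : GL3 k →* Module.End k (Fin 3 → k) where
  toFun g := Matrix.toLinAlgEquiv' (g : Matrix (Fin 3) (Fin 3) k)
  map_one' := by
    show Matrix.toLinAlgEquiv' ((1 : GL3 k) : Matrix (Fin 3) (Fin 3) k) = 1
    rw [Units.val_one, map_one]
  map_mul' g h := by
    show Matrix.toLinAlgEquiv' ((g * h : GL3 k) : Matrix (Fin 3) (Fin 3) k) =
      Matrix.toLinAlgEquiv' (g : Matrix (Fin 3) (Fin 3) k) *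
        Matrix.toLinAlgEquiv' (h : Matrix (Fin 3) (Fin 3) k)
    rw [Units.val_mul, map_mul]

theorem psi_inj (g : GL3 k) : Function.Injective (psi g) := by
  intro a b h
  have h2 := congrArg (psi g⁻¹) h
  rw [← Module.End.mul_apply, ← Module.End.mul_apply, ← map_mul, inv_mul_cancel,
    map_one, Module.End.one_apply, Module.End.one_apply] at h2
  exact h2

theorem u_facts (u : GL3 k) (h3 : ((u : Matrix (Fin 3) (Fin 3) k) - 1) ^ 3 = 0)
    (hreg : minpoly k (u : Matrix (Fin 3) (Fin 3) k) =
      Matrix.charpoly (u : Matrix (Fin 3) (Fin 3) k)) :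
    (psi u - 1) ^ 3 = 0 ∧ finrank k (LinearMap.ker (psi u - 1)) = 1 := by
  set M := (u : Matrix (Fin 3) (Fin 3) k)
  have hψ : psi u = Matrix.toLinAlgEquiv' M := rfl
  have hnil : (psi u - 1) ^ 3 = 0 := by
    have h := congrArg Matrix.toLinAlgEquiv' h3
    rwa [map_pow, map_sub, map_one, map_zero, ← hψ] at h
  refine ⟨hnil, ker_dim_one _ hnil ?_⟩
  intro h2
  have h2' : (M - 1) ^ 2 = 0 := by
    apply Matrix.toLinAlgEquiv'.injective
    rw [map_pow, map_sub, map_one, map_zero, ← hψ]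
    exact h2
  have haev : Polynomial.aeval M ((X - C 1 : k[X]) ^ 2) = 0 := by
    rw [map_pow, map_sub, Polynomial.aeval_X, Polynomial.aeval_C, map_one]
    exact h2'
  have hdvd := minpoly.dvd k M haev
  have hle := Polynomial.natDegree_le_of_dvd hdvd
    (pow_ne_zero _ (Polynomial.X_sub_C_ne_zero 1))
  rw [Polynomial.natDegree_pow, Polynomial.natDegree_X_sub_C] at hle
  have h3' := (reg_iff M).mp hreg
  omega

theorem exists_plane [IsAlgClosed k] (z : GL3 k)
    (h : minpoly k (z : Matrix (Fin 3) (Fin 3) k) ≠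
      Matrix.charpoly (z : Matrix (Fin 3) (Fin 3) k)) :
    ∃ (c : k) (E : Submodule k (Fin 3 → k)), 2 ≤ finrank k E ∧
      ∀ w ∈ E, psi z w = c • w := by
  have hψ : psi z = Matrix.toLinAlgEquiv' (z : Matrix (Fin 3) (Fin 3) k) := rfl
  have hdeg : (minpoly k (Matrix.toLinAlgEquiv'
      (z : Matrix (Fin 3) (Fin 3) k))).natDegree ≤ 2 := by
    rw [minpoly.algEquiv_eq]
    exact deg_le_two _ h
  obtain ⟨c, hc⟩ := eig_plane _ hdeg
  refine ⟨c, LinearMap.ker (Matrix.toLinAlgEquiv'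
    (z : Matrix (Fin 3) (Fin 3) k) - c • 1), hc, ?_⟩
  intro w hw
  have h0 := LinearMap.mem_ker.mp hw
  rw [LinearMap.sub_apply, LinearMap.smul_apply, Module.End.one_apply, sub_eq_zero] at h0
  rw [hψ]
  exact h0



end Stmt6Aux

open Stmt6Aux Module

/-- A finite subgroup `G ⊆ GL_3(k)` acting irreducibly on `k³` and containing a
regular unipotent element is generated by its subset of regular elements. -/
theorem stmt6 (k : Type*) [Field k] [IsAlgClosed k]
    (G : Subgroup (Matrix.GeneralLinearGroup (Fin 3) k)) [Finite G]
    (hirr : ∀ W : Submodule k (Fin 3 → k),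
      (∀ A : Matrix.GeneralLinearGroup (Fin 3) k, A ∈ G →
        ∀ x ∈ W, ((A : Matrix (Fin 3) (Fin 3) k)).mulVec x ∈ W) →
      W = ⊥ ∨ W = ⊤)
    (hunip : ∃ A : Matrix.GeneralLinearGroup (Fin 3) k, A ∈ G ∧
      ((A : Matrix (Fin 3) (Fin 3) k) - 1) ^ 3 = 0 ∧
      minpoly k (A : Matrix (Fin 3) (Fin 3) k) =
        Matrix.charpoly (A : Matrix (Fin 3) (Fin 3) k)) :
    G = Subgroup.closure
      {A : Matrix.GeneralLinearGroup (Fin 3) k | A ∈ G ∧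
        minpoly k (A : Matrix (Fin 3) (Fin 3) k) =
          Matrix.charpoly (A : Matrix (Fin 3) (Fin 3) k)} := by
  classical
  obtain ⟨u, huG, hu3, hureg⟩ := hunip
  have hV : finrank k (Fin 3 → k) = 3 := Module.finrank_fin_fun k
  set S := {A : Matrix.GeneralLinearGroup (Fin 3) k | A ∈ G ∧
      minpoly k (A : Matrix (Fin 3) (Fin 3) k) =
        Matrix.charpoly (A : Matrix (Fin 3) (Fin 3) k)} with hS
  set H := Subgroup.closure S with hH
  have hHG : H ≤ G := (Subgroup.closure_le G).mpr fun A hA => hA.1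
  have huH : u ∈ H := Subgroup.subset_closure ⟨huG, hureg⟩
  obtain ⟨hnil, hL1⟩ := u_facts u hu3 hureg
  set L := LinearMap.ker (psi u - 1) with hLdef
  refine le_antisymm ?_ hHG
  intro x hxG
  by_contra hxH
  have hnonreg : ∀ z : GL3 k, z ∈ G → z ∉ H →
      minpoly k (z : Matrix (Fin 3) (Fin 3) k) ≠
        Matrix.charpoly (z : Matrix (Fin 3) (Fin 3) k) :=
    fun z hzG hzH hreg => hzH (Subgroup.subset_closure ⟨hzG, hreg⟩)
  have hconjS : ∀ g ∈ G, ∀ s ∈ S, g * s * g⁻¹ ∈ S := by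
    intro g hg s hs
    refine ⟨mul_mem (mul_mem hg hs.1) (inv_mem hg), ?_⟩
    have hcoe : ((g * s * g⁻¹ : GL3 k) : Matrix (Fin 3) (Fin 3) k) =
        (g : Matrix (Fin 3) (Fin 3) k) * (s : Matrix (Fin 3) (Fin 3) k) *
          ((g⁻¹ : GL3 k) : Matrix (Fin 3) (Fin 3) k) := by
      rw [Units.val_mul, Units.val_mul]
    have hmp : minpoly k ((g * s * g⁻¹ : GL3 k) : Matrix (Fin 3) (Fin 3) k) =
        minpoly k (s : Matrix (Fin 3) (Fin 3) k) := by
      rw [hcoe]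
      exact minpoly_conj g _
    refine (reg_iff _).mpr ?_
    rw [hmp]
    exact (reg_iff _).mp hs.2
  have hconjH : ∀ g ∈ G, ∀ h ∈ H, g * h * g⁻¹ ∈ H := by
    intro g hg h hh
    refine Subgroup.closure_induction ?_ ?_ ?_ ?_ hh
    · intro s hs
      exact Subgroup.subset_closure (hconjS g hg s hs)
    · have he : g * 1 * g⁻¹ = (1 : GL3 k) := by group
      rw [he]; exact one_mem H
    · intro a b _ _ pa pb
      have he : g * (a * b) * g⁻¹ = (g * a * g⁻¹) * (g * b * g⁻¹) := by group
      rw [he]; exact mul_mem pa pb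
    · intro a _ pa
      have he : g * a⁻¹ * g⁻¹ = (g * a * g⁻¹)⁻¹ := by group
      rw [he]; exact inv_mem pa
  have hmain : ∃ (x₀ : GL3 k) (c₀ : k) (W : Submodule k (Fin 3 → k)), x₀ ∈ G ∧ x₀ ∉ H ∧
      finrank k W = 2 ∧ ∀ w ∈ W, psi x₀ w = c₀ • w := by
    obtain ⟨c, E, hE2, hEsc⟩ := exists_plane x (hnonreg x hxG hxH)
    have hEle : finrank k E ≤ 3 := (Submodule.finrank_le E).trans hV.le
    rcases Nat.lt_or_ge (finrank k E) 3 with hlt | hge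
    · exact ⟨x, c, E, hxG, hxH, by omega, hEsc⟩
    · have hEtop : E = ⊤ := Submodule.eq_top_of_finrank_eq (by rw [hV]; omega)
      have hxsc : ∀ w, psi x w = c • w := fun w => hEsc w (hEtop ▸ Submodule.mem_top)
      have hxuG : x * u ∈ G := mul_mem hxG huG
      have hxuH : x * u ∉ H := by
        intro hmem
        apply hxH
        have he : x = (x * u) * u⁻¹ := by group
        rw [he]; exact mul_mem hmem (inv_mem huH)
      obtain ⟨c', E', hE'2, hE'sc⟩ := exists_plane (x * u) (hnonreg _ hxuG hxuH)
      have hE'le : finrank k E' ≤ 3 := (Submodule.finrank_le E').trans hV.le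
      rcases Nat.lt_or_ge (finrank k E') 3 with hlt' | hge'
      · exact ⟨x * u, c', E', hxuG, hxuH, by omega, hE'sc⟩
      · exfalso
        have hE'top : E' = ⊤ := Submodule.eq_top_of_finrank_eq (by rw [hV]; omega)
        have hxusc : ∀ w, psi (x * u) w = c' • w := fun w =>
          hE'sc w (hE'top ▸ Submodule.mem_top)
        have hc0 : c ≠ 0 := by
          intro h0
          obtain ⟨v, hv⟩ := exists_ne (0 : Fin 3 → k)
          apply hv
          apply psi_inj x
          rw [hxsc v, h0, zero_smul, map_zero]
        have husc : ∀ w, psi u w = (c⁻¹ * c') • w := by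
          intro w
          apply psi_inj x
          have h1 : psi x (psi u w) = c' • w := by
            rw [← Module.End.mul_apply, ← map_mul]
            exact hxusc w
          rw [h1, map_smul, hxsc w, smul_smul]
          congr 1
          rw [mul_comm c⁻¹ c', mul_assoc, inv_mul_cancel₀ hc0, mul_one]
        obtain ⟨v, hv⟩ := exists_ne (0 : Fin 3 → k)
        have h1 : c⁻¹ * c' = 1 := eig_one _ hnil hv (husc v)
        have hker : L = ⊤ := by
          rw [eq_top_iff]
          intro w _
          rw [hLdef, LinearMap.mem_ker, LinearMap.sub_apply, Module.End.one_apply, husc w, h1,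
            one_smul, sub_self]
        rw [hker, finrank_top, hV] at hL1
        omega
  obtain ⟨x₀, c₀, W, hx₀G, hx₀H, hW2, hWsc⟩ := hmain
  have hkey : ∀ y : GL3 k, y ∈ G → y ∉ H → ∀ (Wp : Submodule k (Fin 3 → k)) (cy : k),
      finrank k Wp = 2 → (∀ w ∈ Wp, psi y w = cy • w) → L ≤ Wp := by
    intro y hyG hyH Wp cy hWp2 hWpsc
    have hyuG : y * u ∈ G := mul_mem hyG huG
    have hyuH : y * u ∉ H := by
      intro hmem
      apply hyH
      have he : y = (y * u) * u⁻¹ := by group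
      rw [he]; exact mul_mem hmem (inv_mem huH)
    obtain ⟨mu, W', hW'2, hW'sc⟩ := exists_plane (y * u) (hnonreg _ hyuG hyuH)
    refine core (psi u) (psi y) (psi_inj y) hL1 hnil Wp W' hWp2 hW'2 cy mu hWpsc ?_
    intro w hw
    have h1 := hW'sc w hw
    rwa [map_mul, Module.End.mul_apply] at h1
  have htrans : ∀ g : GL3 k, g ∈ G →
      L ≤ Submodule.map (psi g : (Fin 3 → k) →ₗ[k] (Fin 3 → k)) W := by
    intro g hg
    have hyG : g * x₀ * g⁻¹ ∈ G := mul_mem (mul_mem hg hx₀G) (inv_mem hg)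
    have hyH : g * x₀ * g⁻¹ ∉ H := by
      intro hmem
      apply hx₀H
      have he : x₀ = g⁻¹ * (g * x₀ * g⁻¹) * g⁻¹⁻¹ := by group
      rw [he]
      exact hconjH g⁻¹ (inv_mem hg) _ hmem
    have hrank : finrank k (Submodule.map (psi g : (Fin 3 → k) →ₗ[k] (Fin 3 → k)) W) = 2 := by
      rw [← hW2]
      exact (LinearEquiv.finrank_eq (Submodule.equivMapOfInjective _ (psi_inj g) W)).symm
    refine hkey _ hyG hyH _ c₀ hrank ?_
    rintro w' ⟨w, hwW, rfl⟩
    have h1 : psi (g * x₀ * g⁻¹) (psi g w) = psi (g * x₀) w := by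
      rw [← Module.End.mul_apply, ← map_mul, inv_mul_cancel_right]
    show psi (g * x₀ * g⁻¹) (psi g w) = c₀ • psi g w
    rw [h1, map_mul, Module.End.mul_apply, hWsc w hwW, map_smul]
  set Msub := ⨅ g : G, Submodule.map (psi (g : GL3 k) : (Fin 3 → k) →ₗ[k] (Fin 3 → k)) W
    with hMdef
  have hMinv : ∀ A : GL3 k, A ∈ G → ∀ v ∈ Msub,
      (A : Matrix (Fin 3) (Fin 3) k).mulVec v ∈ Msub := by
    intro A hA v hv
    have hψv : (A : Matrix (Fin 3) (Fin 3) k).mulVec v = psi A v :=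
      (Matrix.toLinAlgEquiv'_apply _ v).symm
    rw [hψv, hMdef]
    refine (Submodule.mem_iInf _).mpr ?_
    intro g
    have hv' := (Submodule.mem_iInf _).mp hv (⟨A⁻¹ * ↑g, mul_mem (inv_mem hA) g.2⟩ : G)
    obtain ⟨w, hwW, hw⟩ := hv'
    refine ⟨w, hwW, ?_⟩
    show psi (↑g) w = psi A v
    rw [← hw, ← Module.End.mul_apply, ← map_mul, mul_inv_cancel_left]
  have hLM : L ≤ Msub := le_iInf fun g => htrans g g.2
  rcases hirr Msub hMinv with hbot | htop
  · rw [hbot, le_bot_iff] at hLM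
    rw [hLM, finrank_bot] at hL1
    omega
  · have h1 : Msub ≤ Submodule.map
        (psi (((⟨1, one_mem G⟩ : G) : GL3 k)) : (Fin 3 → k) →ₗ[k] (Fin 3 → k)) W := by
      rw [hMdef]; exact iInf_le _ _
    have h2 := Submodule.finrank_mono h1
    have h3 : finrank k (Submodule.map
        (psi (((⟨1, one_mem G⟩ : G) : GL3 k)) : (Fin 3 → k) →ₗ[k] (Fin 3 → k)) W) = 2 := by
      rw [← hW2]
      exact (LinearEquiv.finrank_eq (Submodule.equivMapOfInjective _ (psi_inj _) W)).symm
    rw [htop, finrank_top, hV] at h2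
    omega
end

section
/- Let p be a prime, d, r positive integers with e = p^d − 1, and suppose given integers x_0, …, x_{d−1} with 0 ≤ x_i < p − 1 (indices mod d), integers r_0, …, r_{d−1} with 0 ≤ r_i ≤ (p^d − 1)r, and set k_i = (1 + p + ⋯ + p^{d−1}) x_i. Assume k_i ≡ p(k_{i−1} + r_{i−1}) mod (p^d − 1) for all i. Then each r_i ≡ (1 + p + ⋯ + p^{d−1})(x_{i+1} − x_i) mod (p^d − 1), so one may write r_i = (1 + p + ⋯ + p^{d−1})(x_{i+1} − x_i) + (p^d − 1) y_i with 0 ≤ y_i ≤ r, and moreover the quantity κ_0 := k_0 + p(r_0 p^{d−1} + r_1 p^{d−2} + ⋯ + r_{d−1})/(p^d − 1) satisfies κ_0 ≡ x_0 + y_0 + p^{d−1}(x_1 + y_1) + p^{d−2}(x_2 + y_2) + ⋯ + p(x_{d−1} + y_{d−1}) mod (p^d − 1). -/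
/-! Write `s = 1 + p + ⋯ + p^(d-1)` and `e = p^d - 1 = (p - 1) s`. Since `p s ≡ s` and `p` is a
unit modulo `e`, the recurrence `k_i ≡ p (k_{i-1} + r_{i-1})` forces `r_i ≡ s (x_{i+1} - x_i)`, and
the bounds on the `x_i` give `|s (x_{i+1} - x_i)| < e`, which traps the quotient `y_i` in `[0, r]`.
Substituting `r_j = s (x_{j+1} - x_j) + e y_j` into `p ∑ r_j p^(d-1-j)` and shifting the index of
the `x_{j+1}`-sum (the `x_j` are `d`-periodic) gives the exact value
`κ₀ = ∑_{j<d} p^(d-j) (x_j + y_j) - e x_0`; the congruence then only uses `p^d ≡ 1`. -/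

open Finset

section GeometricSums

variable {R : Type*} [CommRing R]

theorem sum_range_pow_sub_mul_succ (q : R) (d : ℕ) (f : ℕ → R) :
    ∑ j ∈ range d, q ^ (d - j) * f (j + 1) + q ^ (d + 1) * f 0 =
      q * (f d + ∑ j ∈ range d, q ^ (d - j) * f j) := by
  have hpow : ∀ j ∈ range d, q ^ (d + 1 - j) * f j = q * (q ^ (d - j) * f j) := by
    intro j hj
    rw [Nat.sub_add_comm (mem_range.1 hj).le, pow_succ]
    ring
  calc ∑ j ∈ range d, q ^ (d - j) * f (j + 1) + q ^ (d + 1) * f 0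
      = ∑ j ∈ range (d + 1), q ^ (d + 1 - j) * f j := by
        rw [sum_range_succ']
        simp only [Nat.add_sub_add_right, Nat.sub_zero]
    _ = q * (f d + ∑ j ∈ range d, q ^ (d - j) * f j) := by
        rw [sum_range_succ, sum_congr rfl hpow, ← mul_sum, Nat.add_sub_cancel_left]
        ring

theorem mul_sum_mul_pow_sub_one_sub (q : R) (d : ℕ) (f : ℕ → R) :
    q * ∑ j ∈ range d, f j * q ^ (d - 1 - j) = ∑ j ∈ range d, q ^ (d - j) * f j := by
  rw [mul_sum]
  refine sum_congr rfl fun j hj => ?_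
  rw [show d - j = d - 1 - j + 1 by have := mem_range.1 hj; omega, pow_succ]
  ring

theorem sum_pow_sub_mul_eq_pow_sub_one_mul (q : R) (d : ℕ) (x y r : ℕ → R)
    (hx : x d = x 0)
    (hr : ∀ j < d, r j = (∑ i ∈ range d, q ^ i) * (x (j + 1) - x j) + (q ^ d - 1) * y j) :
    ∑ j ∈ range d, q ^ (d - j) * r j =
      (q ^ d - 1) * (∑ j ∈ range d, q ^ (d - j) * (x j + y j) -
        q * (∑ i ∈ range d, q ^ i) * x 0) := by
  set s := ∑ i ∈ range d, q ^ i
  have hshift := sum_range_pow_sub_mul_succ q d x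
  rw [hx] at hshift
  have hgeom : s * (q - 1) = q ^ d - 1 := geom_sum_mul q d
  rw [sum_congr rfl fun j hj => show q ^ (d - j) * r j =
      s * (q ^ (d - j) * x (j + 1)) - s * (q ^ (d - j) * x j) + (q ^ d - 1) * (q ^ (d - j) * y j)
    by rw [hr j (mem_range.1 hj)]; ring]
  simp only [mul_add, sum_add_distrib, sum_sub_distrib, ← mul_sum]
  linear_combination s * hshift + (∑ j ∈ range d, q ^ (d - j) * x j) * hgeom

theorem isCoprime_pow_sub_one_self (q : R) {d : ℕ} (hd : 0 < d) : IsCoprime (q ^ d - 1) q :=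
  ⟨-1, q ^ (d - 1), by rw [← pow_succ, Nat.sub_add_cancel hd]; ring⟩

end GeometricSums

theorem abs_mul_sub_lt_mul {s m a b : ℤ} (hs : 0 < s) (ha : 0 ≤ a ∧ a < m) (hb : 0 ≤ b ∧ b < m) :
    |s * (b - a)| < s * m := by
  rw [abs_mul, abs_of_pos hs]
  exact mul_lt_mul_of_pos_left (abs_sub_lt_iff.2 ⟨by linarith, by linarith⟩) hs

theorem nonneg_and_le_of_eq_add_mul {e a b y r : ℤ} (he : 0 < e) (hb : |b| < e)
    (ha : 0 ≤ a ∧ a ≤ e * r) (h : a = b + e * y) : 0 ≤ y ∧ y ≤ r := by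
  obtain ⟨hb₁, hb₂⟩ := abs_lt.1 hb
  constructor
  · have : e * (-1) < e * y := by linarith
    linarith [lt_of_mul_lt_mul_left this he.le]
  · have : e * y < e * (r + 1) := by linarith
    linarith [lt_of_mul_lt_mul_left this he.le]

theorem modEq_geom_sum_mul_sub_of_modEq {q : ℤ} {d : ℕ} (hd : 0 < d) {a b c : ℤ}
    (h : (∑ i ∈ range d, q ^ i) * b ≡ q * ((∑ i ∈ range d, q ^ i) * a + c) [ZMOD q ^ d - 1]) :
    c ≡ (∑ i ∈ range d, q ^ i) * (b - a) [ZMOD q ^ d - 1] := by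
  set s := ∑ i ∈ range d, q ^ i
  have hgeom : s * (q - 1) = q ^ d - 1 := geom_sum_mul q d
  rw [Int.modEq_iff_dvd] at h ⊢
  refine (isCoprime_pow_sub_one_self q hd).dvd_of_dvd_mul_left ?_
  have : q * (s * (b - a) - c) = (q ^ d - 1) * b - (q * (s * a + c) - s * b) := by
    linear_combination b * hgeom
  rw [this]
  exact dvd_sub (dvd_mul_right _ _) h

theorem sum_range_pow_sub_mul_modEq {q : ℤ} {d : ℕ} (hd : 0 < d) (z : ℕ → ℤ) :
    ∑ j ∈ range d, q ^ (d - j) * z j ≡ z 0 + ∑ j ∈ Ico 1 d, q ^ (d - j) * z j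
      [ZMOD q ^ d - 1] := by
  rw [range_eq_Ico, sum_eq_sum_Ico_succ_bot hd, Nat.sub_zero]
  simpa using ((Int.modEq_sub (q ^ d) 1).mul_right (z 0)).add_right _

open Finset in
theorem stmt11_general (p d r : ℕ) (hd : 0 < d)
    (x : ZMod d → ℤ) (hx : ∀ i, 0 ≤ x i ∧ x i < (p : ℤ) - 1)
    (rr : ZMod d → ℤ) (hrr : ∀ i, 0 ≤ rr i ∧ rr i ≤ ((p : ℤ) ^ d - 1) * r)
    (kk : ZMod d → ℤ)
    (hk : ∀ i, kk i = (∑ j ∈ Finset.range d, (p : ℤ) ^ j) * x i)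
    (hcong : ∀ i : ZMod d,
      kk i ≡ (p : ℤ) * (kk (i - 1) + rr (i - 1)) [ZMOD ((p : ℤ) ^ d - 1)]) :
    (∀ i : ZMod d, rr i ≡ (∑ j ∈ Finset.range d, (p : ℤ) ^ j) * (x (i + 1) - x i)
        [ZMOD ((p : ℤ) ^ d - 1)]) ∧
    ∃ y : ZMod d → ℤ,
      (∀ i, 0 ≤ y i ∧ y i ≤ (r : ℤ)) ∧
      (∀ i : ZMod d, rr i = (∑ j ∈ Finset.range d, (p : ℤ) ^ j) * (x (i + 1) - x i) +
        ((p : ℤ) ^ d - 1) * y i) ∧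
      ((p : ℤ) ^ d - 1) ∣
        (p : ℤ) * (∑ j : Fin d, rr ((j : ℕ) : ZMod d) * (p : ℤ) ^ (d - 1 - (j : ℕ))) ∧
      kk 0 + (p : ℤ) * (∑ j : Fin d, rr ((j : ℕ) : ZMod d) * (p : ℤ) ^ (d - 1 - (j : ℕ))) /
          ((p : ℤ) ^ d - 1) ≡
        (x 0 + y 0) + ∑ j ∈ Finset.Ico 1 d, (p : ℤ) ^ (d - j) *
          (x ((j : ℕ) : ZMod d) + y ((j : ℕ) : ZMod d)) [ZMOD ((p : ℤ) ^ d - 1)] := by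
  set s := ∑ j ∈ range d, (p : ℤ) ^ j
  set e := (p : ℤ) ^ d - 1
  have hgeom : s * ((p : ℤ) - 1) = e := geom_sum_mul (p : ℤ) d
  have hp : (1 : ℤ) < p := by linarith [hx 0]
  have he : 0 < e := sub_pos.2 (one_lt_pow₀ hp hd.ne')
  have hs : 0 < s := pos_of_mul_pos_left (hgeom ▸ he) (by linarith)
  have hrr_modEq : ∀ i, rr i ≡ s * (x (i + 1) - x i) [ZMOD e] := fun i =>
    modEq_geom_sum_mul_sub_of_modEq hd (by simpa only [add_sub_cancel_right, hk] using hcong (i + 1))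
  choose y hy using fun i => (hrr_modEq i).symm.dvd
  have hrr_eq : ∀ i, rr i = s * (x (i + 1) - x i) + e * y i := fun i => by linarith [hy i]
  have hy_mem : ∀ i, 0 ≤ y i ∧ y i ≤ (r : ℤ) := fun i =>
    nonneg_and_le_of_eq_add_mul he (hgeom ▸ abs_mul_sub_lt_mul hs (hx i) (hx (i + 1))) (hrr i)
      (hrr_eq i)
  have hsum : (p : ℤ) * ∑ j : Fin d, rr ((j : ℕ) : ZMod d) * (p : ℤ) ^ (d - 1 - (j : ℕ)) =
      e * (∑ j ∈ range d, (p : ℤ) ^ (d - j) * (x j + y j) - p * s * x 0) := by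
    rw [Fin.sum_univ_eq_sum_range (fun j => rr j * (p : ℤ) ^ (d - 1 - j)),
      mul_sum_mul_pow_sub_one_sub]
    have := sum_pow_sub_mul_eq_pow_sub_one_mul (p : ℤ) d (x ·) (y ·) (rr ·) (by simp)
      fun j _ => by simpa only [Nat.cast_succ] using hrr_eq j
    rwa [Nat.cast_zero] at this
  refine ⟨hrr_modEq, y, hy_mem, hrr_eq, ⟨_, hsum⟩, ?_⟩
  rw [hsum, Int.mul_ediv_cancel_left _ he.ne', hk 0]
  calc s * x 0 + (∑ j ∈ range d, (p : ℤ) ^ (d - j) * (x j + y j) - p * s * x 0)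
      = ∑ j ∈ range d, (p : ℤ) ^ (d - j) * (x j + y j) - e * x 0 := by
        linear_combination -x 0 * hgeom
    _ ≡ ∑ j ∈ range d, (p : ℤ) ^ (d - j) * (x j + y j) [ZMOD e] :=
        (Int.modEq_sub_modulus_mul_iff.2 rfl).symm
    _ ≡ _ [ZMOD e] := by simpa using sum_range_pow_sub_mul_modEq hd fun j => x j + y j

open Finset in
/-- The elementary congruence computation for rank one Breuil modules with descent
data.  With `s = 1 + p + ⋯ + p^{d-1}`, `k_i = s·x_i`, `0 ≤ x_i < p - 1`, `0 ≤ r_i ≤ (p^d - 1)r`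
and `k_i ≡ p (k_{i-1} + r_{i-1}) mod (p^d - 1)`, each `r_i ≡ s (x_{i+1} - x_i) mod (p^d - 1)`, so
`r_i = s (x_{i+1} - x_i) + (p^d - 1) y_i` with `0 ≤ y_i ≤ r`;  moreover
`κ₀ = k_0 + p (r_0 p^{d-1} + r_1 p^{d-2} + ⋯ + r_{d-1})/(p^d - 1)` is an integer (the displayed
sum is divisible by `p^d - 1`) and satisfies
`κ₀ ≡ (x_0 + y_0) + p^{d-1}(x_1 + y_1) + p^{d-2}(x_2 + y_2) + ⋯ + p(x_{d-1} + y_{d-1})`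
modulo `p^d - 1`. -/
theorem stmt11 (p d r : ℕ) (hp : p.Prime) (hd : 0 < d) (hr : 0 < r)
    (x : ZMod d → ℤ) (hx : ∀ i, 0 ≤ x i ∧ x i < (p : ℤ) - 1)
    (rr : ZMod d → ℤ) (hrr : ∀ i, 0 ≤ rr i ∧ rr i ≤ ((p : ℤ) ^ d - 1) * r)
    (kk : ZMod d → ℤ)
    (hk : ∀ i, kk i = (∑ j ∈ Finset.range d, (p : ℤ) ^ j) * x i)
    (hcong : ∀ i : ZMod d,
      kk i ≡ (p : ℤ) * (kk (i - 1) + rr (i - 1)) [ZMOD ((p : ℤ) ^ d - 1)]) :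
    (∀ i : ZMod d, rr i ≡ (∑ j ∈ Finset.range d, (p : ℤ) ^ j) * (x (i + 1) - x i)
        [ZMOD ((p : ℤ) ^ d - 1)]) ∧
    ∃ y : ZMod d → ℤ,
      (∀ i, 0 ≤ y i ∧ y i ≤ (r : ℤ)) ∧
      (∀ i : ZMod d, rr i = (∑ j ∈ Finset.range d, (p : ℤ) ^ j) * (x (i + 1) - x i) +
        ((p : ℤ) ^ d - 1) * y i) ∧
      ((p : ℤ) ^ d - 1) ∣
        (p : ℤ) * (∑ j : Fin d, rr ((j : ℕ) : ZMod d) * (p : ℤ) ^ (d - 1 - (j : ℕ))) ∧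
      kk 0 + (p : ℤ) * (∑ j : Fin d, rr ((j : ℕ) : ZMod d) * (p : ℤ) ^ (d - 1 - (j : ℕ))) /
          ((p : ℤ) ^ d - 1) ≡
        (x 0 + y 0) + ∑ j ∈ Finset.Ico 1 d, (p : ℤ) ^ (d - j) *
          (x ((j : ℕ) : ZMod d) + y ((j : ℕ) : ZMod d)) [ZMOD ((p : ℤ) ^ d - 1)] :=
  stmt11_general p d r hd x hx rr hrr kk hk hcong
end

section
/- Let q ≥ 2 be a prime power, p the characteristic of F_q with p > 2, and n ≥ 3 an integer. Suppose a is an integer with 0 ≤ a ≤ q − 1 and there exist integers β, γ with 0 ≤ β, γ ≤ n − 1 such that (q − 1)a ≡ q^β − q^γ (mod (q^n − 1)/(q − 1)). Then a = 0 or a = 1. -/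
/-!
Write `N = 1 + q + ⋯ + q^(n-1)`. Since `0 ≤ (q - 1) a ≤ (q - 1)^2 < N` and `|q^β - q^γ| < N`,
the congruence forces `(q - 1) a = q^β - q^γ` or `(q - 1) a = q^β - q^γ + N`. In the first case
comparing sizes gives `γ = 0` and `β ≤ 1`, hence `a ≤ 1`. The second case is impossible: for
`n ≥ 4` its right side exceeds `(q - 1)^2`, and for `n = 3` it is odd while `q - 1` is even.
-/

open Finset

section GeomSum

variable {Q : ℤ}

theorem pow_lt_geom_sum (hQ : 0 < Q) {n k : ℕ} (hn : 2 ≤ n) (hk : k < n) :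
    Q ^ k < ∑ j ∈ range n, Q ^ j := by
  rcases k with _ | k
  · exact single_lt_sum one_ne_zero (by simp; omega) (by simp; omega) (by positivity)
      fun j _ _ => by positivity
  · exact single_lt_sum (Nat.succ_ne_zero k).symm (by simpa using hk) (by simp; omega)
      (by positivity) fun j _ _ => by positivity

theorem one_add_add_sq_le_geom_sum (hQ : 0 ≤ Q) {n : ℕ} (hn : 3 ≤ n) :
    1 + Q + Q ^ 2 ≤ ∑ j ∈ range n, Q ^ j := by
  have h := sum_le_sum_of_subset_of_nonneg (range_subset_range.mpr hn)
    fun j _ _ => pow_nonneg hQ j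
  simpa [sum_range_succ] using h

end GeomSum

theorem Int.eq_or_eq_add_of_dvd_sub {N x A : ℤ} (hx : |x| < N) (hA : 0 ≤ A) (hAN : A < N)
    (h : N ∣ x - A) : A = x ∨ A = x + N := by
  rcases le_or_gt 0 x with hx0 | hx0
  · left
    have := Int.eq_zero_of_abs_lt_dvd h (abs_sub_lt_of_nonneg_of_lt hx0 (abs_lt.mp hx).2 hA hAN)
    linarith
  · right
    have h' : N ∣ (x + N) - A := by simpa [add_sub_right_comm] using h.add (dvd_refl N)
    have := Int.eq_zero_of_abs_lt_dvd h'
      (abs_sub_lt_of_nonneg_of_lt (by linarith [(abs_lt.mp hx).1]) (by linarith) hA hAN)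
    linarith

theorem eq_zero_or_one_of_sub_one_mul_eq_pow_sub_pow {Q a : ℤ} {β γ : ℕ} (ha0 : 0 ≤ a)
    (ha : a ≤ Q - 1) (h : (Q - 1) * a = Q ^ β - Q ^ γ) : a = 0 ∨ a = 1 := by
  rcases ha0.eq_or_lt with rfl | ha0
  · exact Or.inl rfl
  right
  have hQ : 1 < Q := by linarith
  have hγβ : γ < β := (pow_lt_pow_iff_right₀ hQ).mp (by nlinarith)
  have hγ : γ = 0 := by
    have : Q ^ γ * (Q - 1) ≤ (Q - 1) * (Q - 1) := by
      calc Q ^ γ * (Q - 1) = Q ^ (γ + 1) - Q ^ γ := by ring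
        _ ≤ Q ^ β - Q ^ γ := by gcongr; exacts [hQ.le, hγβ]
        _ = (Q - 1) * a := h.symm
        _ ≤ (Q - 1) * (Q - 1) := by gcongr
    have : Q ^ γ < Q ^ 1 := by nlinarith
    have := (pow_lt_pow_iff_right₀ hQ).mp this
    omega
  have hβ : β = 1 := by
    have : Q ^ β < Q ^ 2 := by subst hγ; nlinarith
    have := (pow_lt_pow_iff_right₀ hQ).mp this
    omega
  subst hγ hβ
  nlinarith

theorem sub_one_mul_ne_pow_sub_pow_add_geom_sum {Q a : ℤ} {n β γ : ℕ} (hQ : Odd Q) (hQ0 : 0 < Q)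
    (hn : 3 ≤ n) (ha : a ≤ Q - 1) (hγ : γ < n) :
    (Q - 1) * a ≠ Q ^ β - Q ^ γ + ∑ j ∈ range n, Q ^ j := by
  intro h
  obtain rfl | hn4 := hn.eq_or_lt
  · have hl : Even ((Q - 1) * a) := (hQ.sub_odd odd_one).mul_right a
    have hr : Odd (Q ^ β - Q ^ γ + ∑ j ∈ range 3, Q ^ j) := by
      simp [sum_range_succ, Int.odd_add, Int.even_add, parity_simps, hQ]
    exact Int.not_even_iff_odd.mpr hr (h ▸ hl)
  · obtain ⟨m, rfl⟩ : ∃ m, n = m + 1 := ⟨n - 1, by omega⟩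
    have hsum := one_add_add_sq_le_geom_sum hQ0.le (n := m) (by omega)
    have hβ : 1 ≤ Q ^ β := one_le_pow₀ hQ0
    have hγ : Q ^ γ ≤ Q ^ m := pow_le_pow_right₀ hQ0 (by omega)
    rw [sum_range_succ] at h
    nlinarith

theorem stmt12_general (p m n q : ℕ) (hp : p.Prime) (hp2 : 2 < p) (hq : q = p ^ m)
    (hn : 3 ≤ n) (a : ℕ) (ha : a ≤ q - 1)
    (β γ : ℕ) (hβ : β ≤ n - 1) (hγ : γ ≤ n - 1)
    (hcong : ((q : ℤ) - 1) * a ≡ (q : ℤ) ^ β - (q : ℤ) ^ γ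
      [ZMOD (∑ j ∈ Finset.range n, (q : ℤ) ^ j)]) :
    a = 0 ∨ a = 1 := by
  have hodd : Odd q := hq ▸ (hp.odd_of_ne_two hp2.ne').pow
  have hq0 : (0 : ℤ) < q := by exact_mod_cast hodd.pos
  have ha' : (a : ℤ) ≤ q - 1 := by omega
  set Q : ℤ := (q : ℤ)
  set N := ∑ j ∈ range n, Q ^ j
  have hAN : (Q - 1) * a < N :=
    calc (Q - 1) * a ≤ (Q - 1) ^ 2 := by nlinarith
      _ < N := by nlinarith [one_add_add_sq_le_geom_sum hq0.le hn]
  have hxN : |Q ^ β - Q ^ γ| < N :=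
    abs_sub_lt_of_nonneg_of_lt (by positivity) (pow_lt_geom_sum hq0 (by omega) (by omega))
      (by positivity) (pow_lt_geom_sum hq0 (by omega) (by omega))
  have hA0 : 0 ≤ (Q - 1) * a := mul_nonneg (by linarith) a.cast_nonneg
  rcases Int.eq_or_eq_add_of_dvd_sub hxN hA0 hAN hcong.dvd with h | h
  · exact_mod_cast eq_zero_or_one_of_sub_one_mul_eq_pow_sub_pow (by positivity) ha' h
  · exact absurd h <|
      sub_one_mul_ne_pow_sub_pow_add_geom_sum hodd.natCast hq0 hn ha' (by omega)

/-- If `q = p^m` is a power of an odd prime, `n ≥ 3`, `0 ≤ a ≤ q - 1` and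
`(q - 1)a ≡ q^β - q^γ (mod (q^n - 1)/(q - 1))` for some `0 ≤ β, γ ≤ n - 1`, then `a ∈ {0, 1}`.
(Here `(q^n - 1)/(q - 1) = 1 + q + ⋯ + q^{n-1}`.) -/
theorem stmt12 (p m n q : ℕ) (hp : p.Prime) (hp2 : 2 < p) (hm : 0 < m) (hq : q = p ^ m)
    (hn : 3 ≤ n) (a : ℕ) (ha : a ≤ q - 1)
    (β γ : ℕ) (hβ : β ≤ n - 1) (hγ : γ ≤ n - 1)
    (hcong : ((q : ℤ) - 1) * a ≡ (q : ℤ) ^ β - (q : ℤ) ^ γ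
      [ZMOD (∑ j ∈ Finset.range n, (q : ℤ) ^ j)]) :
    a = 0 ∨ a = 1 :=
  stmt12_general p m n q hp hp2 hq hn a ha β γ hβ hγ hcong
end
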